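/- arXiv:2410.07454 — 6 statements merged into one kernel-verified Lean document; each statement's English description precedes it below -/
import Mathlib

section
/- Let a_1,...,a_n, b ≥ 0 with max{a_i, b} > 0 for all i. Setting ã_i = max{a_i, b}, the weights w_i proportional to 1/ã_i (normalized so (1/n)∑ w_i = 1) achieve objective value at most 2·ã_H in the problem min_{(1/n)∑ w_i = 1} (max_i a_i w_i + b·max_i w_i), where ã_H = ((1/n)∑ 1/ã_i)^{-1} is the harmonic mean of the ã_i. -/
open Finset

/-- With `ãᵢ = max (aᵢ, b)` and `ãH` its harmonic mean, the weights `wᵢ = ãH / ãᵢ`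
average to `1` and achieve objective value `maxᵢ aᵢ wᵢ + b maxᵢ wᵢ ≤ 2 ãH`. -/
theorem weights_achieve_twice_harmonic (n : ℕ) (hn : 0 < n) (a : Fin n → ℝ) (b : ℝ)
    (ha : ∀ i, 0 ≤ a i) (hb : 0 ≤ b) (hpos : ∀ i, 0 < max (a i) b) :
    let atil : Fin n → ℝ := fun i => max (a i) b
    let atilH : ℝ := ((1 / (n : ℝ)) * ∑ i, 1 / atil i)⁻¹
    let w : Fin n → ℝ := fun i => atilH / atil i
    ((1 / (n : ℝ)) * ∑ i, w i = 1) ∧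
    ((univ : Finset (Fin n)).sup' (univ_nonempty_iff.mpr ⟨⟨0, hn⟩⟩) (fun i => a i * w i)
      + b * (univ : Finset (Fin n)).sup' (univ_nonempty_iff.mpr ⟨⟨0, hn⟩⟩) w
      ≤ 2 * atilH) := by
  intro atil atilH w
  have hne : (univ : Finset (Fin n)).Nonempty := univ_nonempty_iff.mpr ⟨⟨0, hn⟩⟩
  have hsumpos : 0 < (1 / (n : ℝ)) * ∑ i, 1 / atil i := by
    apply mul_pos (by positivity)
    apply Finset.sum_pos (fun i _ => by
      have := hpos i; positivity) hne
  have hH : 0 < atilH := inv_pos.mpr hsumpos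
  constructor
  · have : (1 / (n : ℝ)) * ∑ i, w i = atilH * ((1 / (n : ℝ)) * ∑ i, 1 / atil i) := by
      simp only [w, div_eq_mul_inv, ← Finset.mul_sum, one_div]
      ring
    rw [this, inv_mul_cancel₀ (ne_of_gt hsumpos)]
  · have h1 : (univ : Finset (Fin n)).sup' hne (fun i => a i * w i) ≤ atilH := by
      apply Finset.sup'_le
      intro i _
      have hi := hpos i
      have hle : a i ≤ atil i := le_max_left _ _
      calc a i * w i = a i / atil i * atilH := by simp only [w]; ring
        _ ≤ 1 * atilH := by
            apply mul_le_mul_of_nonneg_right _ (le_of_lt hH)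
            rw [div_le_one hi]; exact hle
        _ = atilH := one_mul _
    have h2 : b * (univ : Finset (Fin n)).sup' hne w ≤ atilH := by
      obtain ⟨i, _, hi⟩ := Finset.exists_mem_eq_sup' hne w
      rw [hi]
      have hip := hpos i
      have hle : b ≤ atil i := le_max_right _ _
      calc b * w i = b / atil i * atilH := by simp only [w]; ring
        _ ≤ 1 * atilH := by
            apply mul_le_mul_of_nonneg_right _ (le_of_lt hH)
            rw [div_le_one hip]; exact hle
        _ = atilH := one_mul _
    linarith
end

section
/- Let H_1,...,H_K be {0,1}-valued function classes on X with VC-dimensions p_1,...,p_K and p = ∑_k p_k, and let H = {f : f(x,k) = f_k(x), f_k ∈ H_k}. Then the growth function of H satisfies Π_H(m) ≤ ((1+e)m/p)^p for all m ≥ p. -/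
/-- A class of `{0,1}`-valued functions shatters a finite set `s` if every `{0,1}`-labelling
of `s` is realized by some function in the class. -/
def ShattersFn {X : Type*} (H : Set (X → Bool)) (s : Finset X) : Prop :=
  ∀ g : X → Bool, ∃ f ∈ H, ∀ x ∈ s, f x = g x

/-- The VC-dimension of a class of `{0,1}`-valued functions, as an extended natural number. -/
noncomputable def vcDimFn {X : Type*} (H : Set (X → Bool)) : ℕ∞ :=
  ⨆ s ∈ {s : Finset X | ShattersFn H s}, (s.card : ℕ∞)

/-- The growth function `Π_H(m)`: the supremum, over `m`-point subsets `s`, of the number of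
distinct restrictions to `s` of functions in `H`. -/
noncomputable def growthFn {X : Type*} (H : Set (X → Bool)) (m : ℕ) : ℕ :=
  ⨆ s ∈ {s : Finset X | s.card = m},
    Set.ncard ((fun (f : X → Bool) (x : {x // x ∈ s}) => f x.1) '' H)

open Finset


lemma aux_bern (n d : ℕ) (hn : 0 < n) (hnd : n ≤ d) :
    ((1 + Real.exp 1) : ℝ) ^ n ≤ (1 + Real.exp 1 * n / d) ^ d := by
  have hd : 0 < (d : ℝ) := by exact_mod_cast Nat.lt_of_lt_of_le hn hnd
  have hn' : 0 < (n : ℝ) := by exact_mod_cast hn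
  have hx : (0:ℝ) ≤ Real.exp 1 * n / d := by positivity
  have key : (1 + Real.exp 1 : ℝ) ≤ (1 + Real.exp 1 * n / d) ^ ((d : ℝ) / n) := by
    have h1 : (1:ℝ) ≤ (d:ℝ)/n := by
      rw [le_div_iff₀ hn']; simpa using (Nat.cast_le.2 hnd : (n:ℝ) ≤ d)
    have := one_add_mul_self_le_rpow_one_add (s := Real.exp 1 * n / d)
      (by linarith) (p := (d:ℝ)/n) h1
    calc (1 + Real.exp 1 : ℝ) = 1 + (d:ℝ)/n * (Real.exp 1 * n / d) := by
          field_simp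
      _ ≤ _ := this
  calc ((1 + Real.exp 1) : ℝ) ^ n = ((1 + Real.exp 1) : ℝ) ^ (n:ℝ) := by
        rw [Real.rpow_natCast]
    _ ≤ (((1 + Real.exp 1 * n / d)) ^ ((d:ℝ)/n)) ^ (n:ℝ) := by
        apply Real.rpow_le_rpow (by positivity) key (by positivity)
    _ = (1 + Real.exp 1 * n / d) ^ (d:ℝ) := by
        rw [← Real.rpow_mul (by positivity)]
        congr 1
        field_simp
    _ = _ := by rw [Real.rpow_natCast]

lemma aux_chernoff (n d : ℕ) (hd : 1 ≤ d) (hdn : d ≤ n) :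
    (∑ i ∈ Finset.range (d+1), (n.choose i : ℝ)) ≤ (Real.exp 1 * n / d) ^ d := by
  have hn : 0 < (n:ℝ) := by exact_mod_cast Nat.lt_of_lt_of_le hd hdn
  have hd' : 0 < (d:ℝ) := by exact_mod_cast hd
  have hdn' : (d:ℝ) ≤ n := Nat.cast_le.2 hdn
  have h1 : ∀ i ∈ Finset.range (d+1),
      (n.choose i : ℝ) ≤ (n/d:ℝ)^d * ((n.choose i : ℝ) * (d/n)^i) := by
    intro i hi
    rw [Finset.mem_range] at hi
    have hi' : i ≤ d := Nat.lt_succ_iff.1 hi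
    have h2 : ((d:ℝ)/n)^i * ((n:ℝ)/d)^d = ((n:ℝ)/d)^(d-i) := by
      rw [pow_sub₀ _ (by positivity) hi', ← inv_pow, inv_div]
      ring
    have h3 : (1:ℝ) ≤ ((n:ℝ)/d)^(d-i) := by
      apply one_le_pow₀
      rw [le_div_iff₀ hd']; linarith
    calc (n.choose i : ℝ) = (n.choose i : ℝ) * 1 := by ring
      _ ≤ (n.choose i : ℝ) * (((d:ℝ)/n)^i * ((n:ℝ)/d)^d) := by
          rw [h2]; exact mul_le_mul_of_nonneg_left h3 (by positivity)
      _ = (n/d:ℝ)^d * ((n.choose i : ℝ) * (d/n)^i) := by ring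
  calc (∑ i ∈ Finset.range (d+1), (n.choose i : ℝ))
      ≤ ∑ i ∈ Finset.range (d+1), (n/d:ℝ)^d * ((n.choose i : ℝ) * (d/n)^i) :=
        Finset.sum_le_sum h1
    _ = (n/d:ℝ)^d * ∑ i ∈ Finset.range (d+1), ((n.choose i : ℝ) * (d/n)^i) := by
        rw [Finset.mul_sum]
    _ ≤ (n/d:ℝ)^d * ∑ i ∈ Finset.range (n+1), ((n.choose i : ℝ) * (d/n)^i) := by
        apply mul_le_mul_of_nonneg_left _ (by positivity)
        apply Finset.sum_le_sum_of_subset_of_nonneg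
        · exact Finset.range_subset_range.2 (by omega)
        · intro i _ _; positivity
    _ = (n/d:ℝ)^d * (1 + (d:ℝ)/n)^n := by
        congr 1
        rw [add_comm (1:ℝ), add_pow]
        apply Finset.sum_congr rfl
        intro i hi
        ring
    _ ≤ (n/d:ℝ)^d * (Real.exp ((d:ℝ)/n))^n := by
        apply mul_le_mul_of_nonneg_left _ (by positivity)
        apply pow_le_pow_left₀ (by positivity)
        have := Real.add_one_le_exp ((d:ℝ)/n)
        linarith
    _ = (Real.exp 1 * n / d) ^ d := by
        have h4 : (Real.exp ((d:ℝ)/n))^n = Real.exp 1 ^ d := by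
          rw [← Real.exp_nat_mul, ← Real.exp_nat_mul]
          congr 1
          field_simp
        rw [h4, ← mul_pow]
        congr 1
        field_simp

/-- uniform bound: `∑_{i≤d} C(n,i) ≤ (1 + e n/d)^d` for all `n, d`. -/
lemma aux_sum_choose (n d : ℕ) :
    (∑ i ∈ Finset.range (d+1), (n.choose i : ℝ)) ≤ (1 + Real.exp 1 * n / d) ^ d := by
  rcases Nat.eq_zero_or_pos d with rfl | hd
  · simp
  rcases le_or_gt d n with h | h
  · calc _ ≤ (Real.exp 1 * n / d : ℝ) ^ d := aux_chernoff n d hd h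
      _ ≤ _ := by
        apply pow_le_pow_left₀ (by positivity)
        linarith
  · have hnat : ∑ i ∈ Finset.range (d+1), n.choose i = 2 ^ n := by
      rw [← Nat.sum_range_choose n]
      refine (Finset.sum_subset (Finset.range_subset_range.2 (by omega)) ?_).symm
      intro i _ hi
      rw [Finset.mem_range, not_lt] at hi
      exact Nat.choose_eq_zero_of_lt (by omega)
    have hsum : (∑ i ∈ Finset.range (d+1), (n.choose i : ℝ)) = 2 ^ n := by
      exact_mod_cast hnat
    rw [hsum]
    calc (2:ℝ)^n ≤ (1 + Real.exp 1)^n := by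
          apply pow_le_pow_left₀ (by norm_num)
          have := Real.add_one_le_exp (1:ℝ)
          linarith
      _ ≤ _ := by
          rcases Nat.eq_zero_or_pos n with rfl | hn
          · simp only [pow_zero, Nat.cast_zero, mul_zero, zero_div, add_zero]
            exact one_le_pow₀ le_rfl
          · exact aux_bern n d hn (by omega)

/-- Sauer–Shelah for `Bool`-valued function classes on a fintype. -/
lemma aux_sauer {α : Type*} [Fintype α] [DecidableEq α] (H : Set (α → Bool)) (d : ℕ)
    (hd : ∀ u : Finset α, ShattersFn H u → u.card ≤ d) :
    H.ncard ≤ ∑ i ∈ Finset.range (d+1), (Fintype.card α).choose i := by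
  classical
  have hfin : H.Finite := Set.toFinite H
  set 𝒜 : Finset (Finset α) :=
    hfin.toFinset.image (fun f => Finset.univ.filter (fun x => f x = true)) with h𝒜
  have hinj : Set.InjOn (fun f : α → Bool => Finset.univ.filter (fun x => f x = true))
      hfin.toFinset := by
    intro f hf g hg hfg
    funext x
    have := Finset.ext_iff.1 hfg x
    simp only [Finset.mem_filter, Finset.mem_univ, true_and] at this
    cases hx : f x <;> cases hy : g x <;> simp_all
  have hcard𝒜 : 𝒜.card = H.ncard := by
    rw [h𝒜, Finset.card_image_of_injOn (by simpa using hinj)]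
    exact (Set.ncard_eq_toFinset_card H hfin).symm
  -- every set shattered (in the Finset sense) by 𝒜 is shattered by H in the function sense
  have hshat : ∀ u ∈ 𝒜.shatterer, u.card ≤ d := by
    intro u hu
    rw [Finset.mem_shatterer] at hu
    apply hd
    intro g
    obtain ⟨A, hA, hAu⟩ := hu (Finset.filter_subset (fun x => g x = true) u)
    rw [h𝒜, Finset.mem_image] at hA
    obtain ⟨f, hf, rfl⟩ := hA
    refine ⟨f, by simpa using hf, fun x hx => ?_⟩
    have := Finset.ext_iff.1 hAu x
    simp only [Finset.mem_inter, Finset.mem_filter, Finset.mem_univ, true_and] at this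
    cases hgx : g x <;> cases hfx : f x <;> simp_all
  calc H.ncard = 𝒜.card := hcard𝒜.symm
    _ ≤ 𝒜.shatterer.card := Finset.card_le_card_shatterer 𝒜
    _ ≤ ((Finset.range (d+1)).biUnion (fun i => Finset.univ.powersetCard i)).card := by
        apply Finset.card_le_card
        intro u hu
        rw [Finset.mem_biUnion]
        exact ⟨u.card, Finset.mem_range.2 (Nat.lt_succ_of_le (hshat u hu)),
          Finset.mem_powersetCard.2 ⟨Finset.subset_univ u, rfl⟩⟩
    _ ≤ ∑ i ∈ Finset.range (d+1), (Fintype.card α).choose i := by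
        refine (Finset.card_biUnion_le).trans ?_
        apply Finset.sum_le_sum
        intro i _
        rw [Finset.card_powersetCard, Finset.card_univ]

lemma aux_combine (K : ℕ) (mk pk : Fin K → ℕ) (p m : ℕ) (hp : p = ∑ k, pk k)
    (hm' : ∑ k, mk k ≤ m) (hpm : p ≤ m) :
    ∏ k, ((1 : ℝ) + Real.exp 1 * mk k / pk k) ^ (pk k) ≤ ((1 + Real.exp 1) * m / p) ^ p := by
  rcases Nat.eq_zero_or_pos p with rfl | hppos
  · have hz : ∀ k, pk k = 0 := by
      intro k
      have := (Finset.sum_eq_zero_iff.1 hp.symm) k (Finset.mem_univ k)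
      exact this
    simp [hz]
  have hp' : 0 < (p:ℝ) := by exact_mod_cast hppos
  have hm0 : 0 < (m:ℝ) := by exact_mod_cast Nat.lt_of_lt_of_le hppos hpm
  set e := Real.exp 1 with he
  have he0 : 0 < e := Real.exp_pos 1
  set z : Fin K → ℝ := fun k => 1 + e * mk k / pk k with hz
  have hz1 : ∀ k, (1:ℝ) ≤ z k := by
    intro k; have : (0:ℝ) ≤ e * mk k / pk k := by positivity
    simp only [hz]; linarith
  set w : Fin K → ℝ := fun k => pk k / p with hw
  have hw0 : ∀ k ∈ Finset.univ, (0:ℝ) ≤ w k := fun k _ => by positivity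
  have hw1 : ∑ k, w k = 1 := by
    simp only [hw, ← Finset.sum_div]
    rw [div_eq_one_iff_eq (ne_of_gt hp')]
    exact_mod_cast hp.symm
  have hgm := Real.geom_mean_le_arith_mean_weighted Finset.univ w z hw0 hw1
    (fun k _ => le_trans zero_le_one (hz1 k))
  -- the arithmetic mean is at most (1+e)m/p
  have ham : ∑ k, w k * z k ≤ (1 + e) * m / p := by
    have step : ∀ k ∈ Finset.univ, w k * z k ≤ ((pk k : ℝ) + e * mk k) / p := by
      intro k _
      simp only [hw, hz]
      rcases Nat.eq_zero_or_pos (pk k) with hk0 | hkpos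
      · simp [hk0]
        positivity
      · have hpk' : (0:ℝ) < pk k := by exact_mod_cast hkpos
        rw [div_mul_eq_mul_div, mul_add, mul_one]
        apply div_le_div_of_nonneg_right _ hp'.le
        have hq : (pk k:ℝ) * (e * (mk k:ℝ) / (pk k:ℝ)) = e * mk k := by
          field_simp
        rw [hq]
    calc ∑ k, w k * z k ≤ ∑ k, ((pk k : ℝ) + e * mk k) / p := Finset.sum_le_sum step
      _ = ((p:ℝ) + e * ∑ k, (mk k:ℝ)) / p := by
          rw [← Finset.sum_div, Finset.sum_add_distrib, ← Finset.mul_sum]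
          congr 2
          exact_mod_cast hp.symm
      _ ≤ ((m:ℝ) + e * m) / p := by
          apply div_le_div_of_nonneg_right _ hp'.le
          have h1 : (p:ℝ) ≤ m := by exact_mod_cast hpm
          have h2 : (∑ k, (mk k:ℝ)) ≤ m := by exact_mod_cast hm'
          nlinarith
      _ = (1 + e) * m / p := by ring_nf
  -- raise to the p-th power
  have key : ∏ k, z k ^ (pk k) = (∏ k, z k ^ w k) ^ (p:ℝ) := by
    rw [← Real.finset_prod_rpow _ _ (fun k _ => by positivity)]
    apply Finset.prod_congr rfl
    intro k _
    rw [← Real.rpow_mul (le_trans zero_le_one (hz1 k))]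
    simp only [hw]
    rw [div_mul_cancel₀ _ (ne_of_gt hp'), Real.rpow_natCast]
  rw [key]
  calc (∏ k, z k ^ w k) ^ (p:ℝ) ≤ (∑ k, w k * z k) ^ (p:ℝ) := by
        apply Real.rpow_le_rpow _ hgm (by positivity)
        apply Finset.prod_nonneg
        intro k _
        exact Real.rpow_nonneg (le_trans zero_le_one (hz1 k)) _
    _ ≤ ((1 + e) * m / p) ^ (p:ℝ) := by
        apply Real.rpow_le_rpow _ ham (by positivity)
        apply Finset.sum_nonneg
        intro k _
        exact mul_nonneg (hw0 k (Finset.mem_univ k)) (le_trans zero_le_one (hz1 k))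
    _ = ((1 + e) * m / p) ^ p := by rw [Real.rpow_natCast]

lemma aux_growth_le {X : Type*} (H : Set (X → Bool)) (m : ℕ) (r : ℝ) (hr : 0 ≤ r)
    (h : ∀ s : Finset X, s.card = m →
      (Set.ncard ((fun (f : X → Bool) (x : {x // x ∈ s}) => f x.1) '' H) : ℝ) ≤ r) :
    (growthFn H m : ℝ) ≤ r := by
  have key : growthFn H m ≤ Nat.floor r := by
    rw [growthFn]
    apply ciSup_le'
    intro s
    apply ciSup_le'
    intro hs
    have hs' : s.card = m := hs
    have := h s hs'
    exact Nat.le_floor this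
  calc (growthFn H m : ℝ) ≤ (Nat.floor r : ℝ) := Nat.cast_le.2 key
    _ ≤ r := Nat.floor_le hr

-- test shattering lift
lemma aux_shat_lift {X : Type*} [DecidableEq X] (Hc : Set (X → Bool)) (t : Finset X)
    (u : Finset {x // x ∈ t})
    (hu : ShattersFn ((fun (f : X → Bool) (x : {x // x ∈ t}) => f x.1) '' Hc) u) :
    ShattersFn Hc (u.image Subtype.val) := by
  classical
  intro g
  obtain ⟨h, ⟨f, hf, rfl⟩, hfg⟩ := hu (fun y => g y.1)
  refine ⟨f, hf, fun x hx => ?_⟩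
  obtain ⟨y, hy, rfl⟩ := Finset.mem_image.1 hx
  exact hfg y hy

lemma aux_card_le_of_vc {X : Type*} (Hc : Set (X → Bool)) (d : ℕ)
    (hvc : vcDimFn Hc = (d : ℕ∞)) (u : Finset X) (hu : ShattersFn Hc u) :
    u.card ≤ d := by
  have : (u.card : ℕ∞) ≤ vcDimFn Hc := by
    apply le_iSup₂ (f := fun (s : Finset X) (_ : s ∈ {s : Finset X | ShattersFn Hc s}) =>
      (s.card : ℕ∞)) u hu
  rw [hvc] at this
  exact_mod_cast this

/-- Growth function of the mixture-of-experts class: if `VCdim(H_k) = p_k` and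
`p = ∑ₖ p_k`, then `Π_H(m) ≤ ((1+e) m / p)^p` for `m ≥ p`. -/
theorem growth_mixture_of_experts {X : Type*} (K : ℕ) (Hk : Fin K → Set (X → Bool))
    (H : Set (X × Fin K → Bool))
    (hH : H = {f | ∃ g : Fin K → X → Bool, (∀ k, g k ∈ Hk k) ∧
      ∀ x k, f (x, k) = g k x})
    (pk : Fin K → ℕ) (hpk : ∀ k, vcDimFn (Hk k) = (pk k : ℕ∞))
    (p : ℕ) (hp : p = ∑ k, pk k) (m : ℕ) (hm : p ≤ m) :
    (growthFn H m : ℝ) ≤ ((1 + Real.exp 1) * m / p) ^ p := by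
  classical
  have e0 := Real.exp_pos 1
  have hr : (0:ℝ) ≤ ((1 + Real.exp 1) * m / p) ^ p := by positivity
  apply aux_growth_le _ _ _ hr
  intro s hs
  set tk : Fin K → Finset X := fun k => (s.filter (fun a => a.2 = k)).image Prod.fst with htk
  set mk : Fin K → ℕ := fun k => (tk k).card with hmk
  have hinj_fst : ∀ k : Fin K, Set.InjOn Prod.fst ((s.filter (fun a => a.2 = k) : Finset (X × Fin K)) : Set (X × Fin K)) := by
    intro k a ha b hb hab
    simp only [Finset.coe_filter, Set.mem_setOf_eq] at ha hb
    exact Prod.ext hab (ha.2.trans hb.2.symm)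
  have hsum_mk : ∑ k, mk k = m := by
    rw [← hs, Finset.card_eq_sum_card_fiberwise
      (f := Prod.snd) (t := Finset.univ) (fun x _ => Finset.mem_univ x.2)]
    apply Finset.sum_congr rfl
    intro k _
    simp only [hmk, htk]
    exact Finset.card_image_of_injOn (hinj_fst k)
  -- Step B : Sauer bound for each restricted class
  have stepB : ∀ k : Fin K,
      ((fun (f : X → Bool) (x : {x // x ∈ tk k}) => f x.1) '' Hk k).ncard ≤
        ∑ i ∈ Finset.range (pk k + 1), (mk k).choose i := by
    intro k
    have := aux_sauer ((fun (f : X → Bool) (x : {x // x ∈ tk k}) => f x.1) '' Hk k) (pk k) ?_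
    · rwa [Fintype.card_coe] at this
    · intro u hu
      have h1 := aux_shat_lift (Hk k) (tk k) u hu
      have h2 := aux_card_le_of_vc (Hk k) (pk k) (hpk k) _ h1
      rwa [Finset.card_image_of_injective _ Subtype.val_injective] at h2
  -- Step A : injection into the product of restricted classes
  set T : Set ({a // a ∈ s} → Bool) :=
    (fun (f : X × Fin K → Bool) (x : {a // a ∈ s}) => f x.1) '' H with hT
  have stepA : T.ncard ≤ ∏ k,
      ((fun (f : X → Bool) (x : {x // x ∈ tk k}) => f x.1) '' Hk k).ncard := by
    have hsel : ∀ h : ↥T, ∃ g : Fin K → X → Bool, (∀ k, g k ∈ Hk k) ∧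
        ∀ y : {a // a ∈ s}, (h : {a // a ∈ s} → Bool) y = g y.1.2 y.1.1 := by
      rintro ⟨h, hh⟩
      obtain ⟨f, hf, rfl⟩ := hh
      rw [hH] at hf
      obtain ⟨g, hg1, hg2⟩ := hf
      exact ⟨g, hg1, fun y => hg2 y.1.1 y.1.2⟩
    choose g hg1 hg2 using hsel
    let φ : ↥T → ∀ k, ↥((fun (f : X → Bool) (x : {x // x ∈ tk k}) => f x.1) '' Hk k) :=
      fun h k => ⟨fun x => g h k x.1, ⟨g h k, hg1 h k, rfl⟩⟩
    have hφinj : Function.Injective φ := by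
      intro h1 h2 hφ
      apply Subtype.ext
      funext y
      have hyt : y.1.1 ∈ tk y.1.2 := by
        simp only [htk]
        exact Finset.mem_image.2 ⟨y.1, Finset.mem_filter.2 ⟨y.2, rfl⟩, rfl⟩
      have hgg := congrFun (congrArg Subtype.val (congrFun hφ y.1.2)) ⟨y.1.1, hyt⟩
      rw [hg2 h1 y, hg2 h2 y]
      exact hgg
    have hcard := Nat.card_le_card_of_injective φ hφinj
    rw [Nat.card_pi] at hcard
    simpa only [Nat.card_coe_set_eq] using hcard
  -- put everything together
  calc (T.ncard : ℝ)
      ≤ ∏ k, (((fun (f : X → Bool) (x : {x // x ∈ tk k}) => f x.1) '' Hk k).ncard : ℝ) := by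
        exact_mod_cast stepA
    _ ≤ ∏ k, ((1:ℝ) + Real.exp 1 * mk k / pk k) ^ (pk k) := by
        apply Finset.prod_le_prod (fun k _ => by positivity)
        intro k _
        calc (((fun (f : X → Bool) (x : {x // x ∈ tk k}) => f x.1) '' Hk k).ncard : ℝ)
            ≤ ∑ i ∈ Finset.range (pk k + 1), ((mk k).choose i : ℝ) := by
              exact_mod_cast stepB k
          _ ≤ _ := aux_sum_choose (mk k) (pk k)
    _ ≤ ((1 + Real.exp 1) * m / p) ^ p :=
        aux_combine K mk pk p m hp (le_of_eq hsum_mk) hm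
end

section
/- Let p_0, m_0 > 0 with m_0 ≤ p_0 (interpreting 2^{m_0/p_0} with m_0/p_0 ∈ [0,1]), and nonnegative reals m_k, p_k for k in a finite index set K_1 with m_k ≥ p_k > 0. Set p = p_0 + ∑_{k∈K_1} p_k and m ≥ m_0 + ∑_{k∈K_1} m_k with m ≥ p. Then (2^{m_0/p_0})^{p_0} · ∏_{k∈K_1} (e m_k/p_k)^{p_k} ≤ ((1+e)m/p)^p. -/
open Finset Real

/-- `2 ^ x ≤ 1 + x` for `x ∈ [0,1]`, by convexity of `exp`. -/
lemma two_rpow_le_one_add {x : ℝ} (hx0 : 0 ≤ x) (hx1 : x ≤ 1) :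
    (2 : ℝ) ^ x ≤ 1 + x := by
  have h := convexOn_exp.2 (Set.mem_univ (0 : ℝ)) (Set.mem_univ (Real.log 2))
    (by linarith : (0:ℝ) ≤ 1 - x) hx0 (by ring)
  simp only [smul_eq_mul, mul_zero, zero_add, Real.exp_zero] at h
  have h2 : Real.exp (Real.log 2) = 2 := Real.exp_log (by norm_num)
  rw [h2] at h
  calc (2 : ℝ) ^ x = Real.exp (x * Real.log 2) := by
        rw [Real.rpow_def_of_pos (by norm_num)]; ring_nf
    _ ≤ (1 - x) * 1 + x * 2 := h
    _ = 1 + x := by ring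

/-- Weighted AM–GM combination:
`(2^{m₀/p₀})^{p₀} · ∏ₖ (e mₖ/pₖ)^{pₖ} ≤ ((1+e) m / p)^p`. -/
theorem growth_product_bound {ι : Type*} (K₁ : Finset ι)
    (p₀ m₀ : ℝ) (hp₀ : 0 < p₀) (hm₀ : 0 < m₀) (hm₀p₀ : m₀ ≤ p₀)
    (m' p' : ι → ℝ) (hp' : ∀ k ∈ K₁, 0 < p' k) (hm' : ∀ k ∈ K₁, p' k ≤ m' k)
    (p m : ℝ) (hp : p = p₀ + ∑ k ∈ K₁, p' k)
    (hm : m₀ + ∑ k ∈ K₁, m' k ≤ m) (hmp : p ≤ m) :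
    ((2 : ℝ) ^ (m₀ / p₀)) ^ p₀ * ∏ k ∈ K₁, (Real.exp 1 * m' k / p' k) ^ (p' k) ≤
      ((1 + Real.exp 1) * m / p) ^ p := by
  classical
  have hsum_nonneg : (0:ℝ) ≤ ∑ k ∈ K₁, p' k :=
    Finset.sum_nonneg fun k hk => (hp' k hk).le
  have hppos : 0 < p := by rw [hp]; positivity
  have hmpos : 0 < m := lt_of_lt_of_le hppos hmp
  -- the combined index set over `Option ι`
  set s : Finset (Option ι) := insert none (K₁.map Function.Embedding.some) with hs
  set w : Option ι → ℝ := fun o => o.elim p₀ p' with hw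
  set z : Option ι → ℝ := fun o => o.elim (1 + m₀ / p₀) (fun k => Real.exp 1 * m' k / p' k)
    with hz
  have hnone : none ∉ K₁.map Function.Embedding.some := by simp
  have hw_nonneg : ∀ i ∈ s, 0 ≤ w i := by
    rintro (_ | k) hi
    · exact hp₀.le
    · simp only [hs, Finset.mem_insert, Finset.mem_map] at hi
      obtain ⟨k', hk', hk'eq⟩ := hi.resolve_left (by simp)
      cases hk'eq; exact (hp' _ hk').le
  have hz_nonneg : ∀ i ∈ s, 0 ≤ z i := by
    rintro (_ | k) hi
    · have : 0 ≤ m₀ / p₀ := by positivity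
      show 0 ≤ 1 + m₀ / p₀
      linarith
    · simp only [hs, Finset.mem_insert, Finset.mem_map] at hi
      obtain ⟨k', hk', hk'eq⟩ := hi.resolve_left (by simp)
      cases hk'eq
      have h1 := hp' _ hk'
      have h2 := Real.exp_pos 1
      have h3 := (h1.trans_le (hm' _ hk'))
      exact div_nonneg (mul_nonneg h2.le h3.le) h1.le
  have hwsum : ∑ i ∈ s, w i = p := by
    rw [hs, Finset.sum_insert hnone, Finset.sum_map, hp]
    rfl
  have hzprod : ∏ i ∈ s, z i ^ w i
      = (1 + m₀ / p₀) ^ p₀ * ∏ k ∈ K₁, (Real.exp 1 * m' k / p' k) ^ (p' k) := by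
    rw [hs, Finset.prod_insert hnone, Finset.prod_map]
    rfl
  have hwz : ∑ i ∈ s, w i * z i ≤ (1 + Real.exp 1) * m := by
    rw [hs, Finset.sum_insert hnone, Finset.sum_map]
    have h1 : (w none) * (z none) = p₀ + m₀ := by
      show p₀ * (1 + m₀ / p₀) = p₀ + m₀
      field_simp
    have h2 : ∀ k ∈ K₁, w (Function.Embedding.some k) * z (Function.Embedding.some k)
        = Real.exp 1 * m' k := by
      intro k hk
      have hk0 : p' k ≠ 0 := (hp' k hk).ne'
      show p' k * (Real.exp 1 * m' k / p' k) = Real.exp 1 * m' k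
      field_simp
    rw [h1, Finset.sum_congr rfl h2, ← Finset.mul_sum]
    have he1 : (1:ℝ) ≤ Real.exp 1 := by
      have := Real.add_one_le_exp (1:ℝ); linarith
    have hsm : ∑ k ∈ K₁, m' k ≤ m - m₀ := by linarith
    have hp0m : p₀ ≤ m := by
      have : p₀ ≤ p := by rw [hp]; linarith
      linarith
    nlinarith [Real.exp_pos 1]
  -- apply AM–GM
  have hAM := Real.geom_mean_le_arith_mean s w z hw_nonneg (by rw [hwsum]; exact hppos)
    hz_nonneg
  rw [hwsum] at hAM
  have hprod_nonneg : 0 ≤ ∏ i ∈ s, z i ^ w i :=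
    Finset.prod_nonneg fun i hi => Real.rpow_nonneg (hz_nonneg i hi) _
  have key : ∏ i ∈ s, z i ^ w i ≤ ((1 + Real.exp 1) * m / p) ^ p := by
    have h1 : ((∏ i ∈ s, z i ^ w i) ^ p⁻¹) ^ p ≤ ((1 + Real.exp 1) * m / p) ^ p := by
      apply Real.rpow_le_rpow (Real.rpow_nonneg hprod_nonneg _) _ hppos.le
      refine hAM.trans ?_
      gcongr
    rwa [Real.rpow_inv_rpow hprod_nonneg hppos.ne'] at h1
  have hfirst : ((2 : ℝ) ^ (m₀ / p₀)) ^ p₀ ≤ (1 + m₀ / p₀) ^ p₀ := by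
    apply Real.rpow_le_rpow (Real.rpow_nonneg (by norm_num) _)
      (two_rpow_le_one_add (by positivity) ((div_le_one hp₀).2 hm₀p₀)) hp₀.le
  have hprod2_nonneg : 0 ≤ ∏ k ∈ K₁, (Real.exp 1 * m' k / p' k) ^ (p' k) :=
    Finset.prod_nonneg fun k hk => Real.rpow_nonneg
      (by have := hp' k hk; have := (hp' k hk).trans_le (hm' k hk);
          have := Real.exp_pos 1; positivity) _
  calc ((2 : ℝ) ^ (m₀ / p₀)) ^ p₀ * ∏ k ∈ K₁, (Real.exp 1 * m' k / p' k) ^ (p' k)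
      ≤ (1 + m₀ / p₀) ^ p₀ * ∏ k ∈ K₁, (Real.exp 1 * m' k / p' k) ^ (p' k) :=
        mul_le_mul_of_nonneg_right hfirst hprod2_nonneg
    _ = ∏ i ∈ s, z i ^ w i := hzprod.symm
    _ ≤ ((1 + Real.exp 1) * m / p) ^ p := key
end

section
/- Suppose nonnegative reals A, B, E, P satisfy: |A − E| > ε(α + A + E) and |B − E| < (ε/2)(α + B + E), where α > 0 and 0 < ε < 1. Then |A − B| > (ε/8)(2α + A + B). -/
/-- Symmetrization step: if `|A - E| > ε (α + A + E)` and `|B - E| < (ε/2)(α + B + E)`,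
then `|A - B| > (ε/8)(2α + A + B)`. -/
theorem symmetrization_step (A B E α ε : ℝ) (hA : 0 ≤ A) (hB : 0 ≤ B) (hE : 0 ≤ E)
    (hα : 0 < α) (hε0 : 0 < ε) (hε1 : ε < 1)
    (h1 : ε * (α + A + E) < |A - E|)
    (h2 : |B - E| < (ε / 2) * (α + B + E)) :
    (ε / 8) * (2 * α + A + B) < |A - B| := by
  rw [abs_sub_lt_iff] at h2
  obtain ⟨h2a, h2b⟩ := h2
  rcases abs_cases (A - E) with ⟨hc, _⟩ | ⟨hc, hneg⟩ <;> rw [hc] at h1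
  · rw [lt_abs]; left
    nlinarith [mul_lt_mul_of_pos_left h2a hε0, mul_lt_mul_of_pos_left h1 hε0,
      mul_nonneg hε0.le hB, mul_nonneg hε0.le hE, mul_nonneg hε0.le hA, mul_pos hε0 hα]
  · rw [lt_abs]; right
    nlinarith [mul_lt_mul_of_pos_left h2b hε0, mul_lt_mul_of_pos_left h1 hε0,
      mul_nonneg hε0.le hB, mul_nonneg hε0.le hE, mul_nonneg hε0.le hA, mul_pos hε0 hα]
end

section
/- Let U_1,...,U_n be independent Rademacher random variables (uniform on {−1,+1}) and c_1,...,c_n ≥ 0 fixed nonnegative reals bounded by c_i ≤ M. Then for any a, b > 0, P{|(1/n)∑ U_i c_i| > a + b·(1/n)∑ c_i} ≤ 2 exp(−2nab/M). -/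
/-!
By Hoeffding's lemma a Rademacher variable is `1`-sub-Gaussian, so `S = ∑ Uᵢ cᵢ` is sub-Gaussian
with variance proxy `∑ cᵢ² ≤ M ∑ cᵢ`. The event is `|S| > n a + b ∑ cᵢ`, and the Chernoff bound
for both tails of `S` at the fixed parameter `t = 2b/M` gives the exponent
`-t (n a + b ∑ cᵢ) + t² M ∑ cᵢ / 2 = -2nab/M`: the `b ∑ cᵢ` part of the level exactly pays for
the variance term, which replaces optimising in `t` followed by AM–GM.
-/

open MeasureTheory ProbabilityTheory Real
open scoped NNReal

namespace ProbabilityTheory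

variable {Ω : Type*} [MeasurableSpace Ω] {μ : Measure Ω}

def IsRademacher (U : Ω → ℝ) (μ : Measure Ω) : Prop :=
  μ (U ⁻¹' {1}) = 1 / 2 ∧ μ (U ⁻¹' {-1}) = 1 / 2

namespace IsRademacher

variable [IsProbabilityMeasure μ] {U : Ω → ℝ}

lemma ae_eq_one_or_neg_one (hU : Measurable U) (h : IsRademacher U μ) :
    ∀ᵐ ω ∂μ, U ω = 1 ∨ U ω = -1 := by
  have hB : MeasurableSet (U ⁻¹' {-1}) := hU (measurableSet_singleton _)
  have hdisj : Disjoint (U ⁻¹' {1}) (U ⁻¹' {-1}) :=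
    (Set.disjoint_singleton.2 (by norm_num)).preimage U
  refine mem_ae_iff.2 ((prob_compl_eq_zero_iff ((hU (measurableSet_singleton _)).union hB)).2 ?_)
  rw [measure_union hdisj hB, h.1, h.2, ENNReal.add_halves]

lemma integral_eq_zero (hU : Measurable U) (h : IsRademacher U μ) : ∫ ω, U ω ∂μ = 0 := by
  have hA : MeasurableSet (U ⁻¹' {1}) := hU (measurableSet_singleton _)
  have hB : MeasurableSet (U ⁻¹' {-1}) := hU (measurableSet_singleton _)
  have hsplit : U =ᵐ[μ] fun ω ↦ (U ⁻¹' {1}).indicator 1 ω - (U ⁻¹' {-1}).indicator 1 ω := by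
    filter_upwards [h.ae_eq_one_or_neg_one hU] with ω hω
    rcases hω with hω | hω <;> norm_num [Set.indicator, hω]
  rw [integral_congr_ae hsplit, integral_sub ((integrable_const 1).indicator hA)
    ((integrable_const 1).indicator hB), integral_indicator_one hA, integral_indicator_one hB,
    measureReal_def, measureReal_def, h.1, h.2, sub_self]

lemma hasSubgaussianMGF (hU : Measurable U) (h : IsRademacher U μ) :
    HasSubgaussianMGF U 1 μ := by
  have hIcc : ∀ᵐ ω ∂μ, U ω ∈ Set.Icc (-1 : ℝ) 1 := by
    filter_upwards [h.ae_eq_one_or_neg_one hU] with ω hω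
    rcases hω with hω | hω <;> simp [hω]
  convert hasSubgaussianMGF_of_mem_Icc_of_integral_eq_zero hU.aemeasurable hIcc
    (h.integral_eq_zero hU)
  norm_num

end IsRademacher

lemma hasSubgaussianMGF_sum_mul_rademacher {ι : Type*} [Fintype ι] [IsProbabilityMeasure μ]
    {U : ι → Ω → ℝ} (hmeas : ∀ i, Measurable (U i)) (hindep : iIndepFun U μ)
    (hrad : ∀ i, IsRademacher (U i) μ) (c : ι → ℝ) :
    HasSubgaussianMGF (fun ω ↦ ∑ i, U i ω * c i) (∑ i, ‖c i‖₊ ^ 2) μ := by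
  have hX (i : ι) (_ : i ∈ Finset.univ) :
      HasSubgaussianMGF (fun ω ↦ U i ω * c i) (‖c i‖₊ ^ 2) μ := by
    convert ((hrad i).hasSubgaussianMGF (hmeas i)).const_mul (c i) using 1
    · simp only [mul_comm]
    · -- `const_mul` writes its parameter as an anonymous-constructor `ℝ≥0`, which `simp` leaves alone.
      ext
      simp only [NNReal.coe_pow, coe_nnnorm, norm_eq_abs, sq_abs]
      exact (congrArg NNReal.toReal (mul_one (⟨c i ^ 2, sq_nonneg _⟩ : ℝ≥0))).symm
  exact HasSubgaussianMGF.sum_of_iIndepFun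
    (hindep.comp (fun i x ↦ x * c i) fun i ↦ measurable_mul_const _) hX

namespace HasSubgaussianMGF

variable [IsFiniteMeasure μ] {X : Ω → ℝ} {c : ℝ≥0}

lemma measureReal_ge_le_exp_add (h : HasSubgaussianMGF X c μ) (ε : ℝ) {t : ℝ} (ht : 0 ≤ t) :
    μ.real {ω | ε ≤ X ω} ≤ exp (-t * ε + c * t ^ 2 / 2) :=
  calc μ.real {ω | ε ≤ X ω} ≤ exp (-t * ε) * mgf X μ t :=
        measure_ge_le_exp_mul_mgf ε ht (h.integrable_exp_mul t)
    _ ≤ exp (-t * ε + c * t ^ 2 / 2) := by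
        rw [exp_add]
        gcongr
        exact h.mgf_le t

lemma measureReal_abs_gt_le_exp_add (h : HasSubgaussianMGF X c μ) (ε : ℝ) {t : ℝ}
    (ht : 0 ≤ t) : μ.real {ω | ε < |X ω|} ≤ 2 * exp (-t * ε + c * t ^ 2 / 2) :=
  calc μ.real {ω | ε < |X ω|} ≤ μ.real ({ω | ε ≤ X ω} ∪ {ω | ε ≤ (-X) ω}) :=
        measureReal_mono fun ω (hω : ε < |X ω|) ↦ by
          rcases lt_abs.1 hω with h | h
          exacts [Or.inl h.le, Or.inr h.le]
    _ ≤ μ.real {ω | ε ≤ X ω} + μ.real {ω | ε ≤ (-X) ω} := measureReal_union_le _ _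
    _ ≤ 2 * exp (-t * ε + c * t ^ 2 / 2) := by
        linarith [h.measureReal_ge_le_exp_add ε ht, h.neg.measureReal_ge_le_exp_add ε ht]

end HasSubgaussianMGF

end ProbabilityTheory

theorem rademacher_weighted_tail_general
    {Ω : Type*} [MeasurableSpace Ω] (μ : Measure Ω) [IsProbabilityMeasure μ]
    (n : ℕ) (hn : 0 < n) (U : Fin n → Ω → ℝ)
    (hmeas : ∀ i, Measurable (U i))
    (hindep : iIndepFun U μ)
    (hrad : ∀ i, μ (U i ⁻¹' {1}) = 1 / 2 ∧ μ (U i ⁻¹' {-1}) = 1 / 2)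
    (c : Fin n → ℝ) (M : ℝ) (hM : 0 < M) (hc0 : ∀ i, 0 ≤ c i) (hcM : ∀ i, c i ≤ M)
    (a b : ℝ) (hb : 0 < b) :
    μ {ω | a + b * ((1 / (n : ℝ)) * ∑ i, c i) < |(1 / (n : ℝ)) * ∑ i, U i ω * c i|} ≤
      ENNReal.ofReal (2 * Real.exp (-(2 * (n : ℝ) * a * b) / M)) := by
  set C := ∑ i, c i
  set C₂ := ∑ i, ‖c i‖₊ ^ 2
  have hS := hasSubgaussianMGF_sum_mul_rademacher hmeas hindep hrad c
  have hC₂ : (C₂ : ℝ) ≤ M * C := by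
    simp only [C₂, C, NNReal.coe_sum, NNReal.coe_pow, coe_nnnorm, norm_eq_abs, sq_abs,
      Finset.mul_sum]
    gcongr with i
    rw [sq]
    exact mul_le_mul_of_nonneg_right (hcM i) (hc0 i)
  have hevent : {ω | a + b * ((1 / (n : ℝ)) * C) < |(1 / (n : ℝ)) * ∑ i, U i ω * c i|} =
      {ω | n * a + b * C < |∑ i, U i ω * c i|} := by
    have hn' : (0 : ℝ) < n := Nat.cast_pos.mpr hn
    ext ω
    rw [Set.mem_ofPred_eq, Set.mem_ofPred_eq, abs_mul, abs_of_pos (by positivity)]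
    field_simp
  have hexponent : -(2 * b / M) * (n * a + b * C) + C₂ * (2 * b / M) ^ 2 / 2 ≤
      -(2 * n * a * b) / M := by
    have : C₂ * (2 * b / M) ^ 2 / 2 ≤ M * C * (2 * b / M) ^ 2 / 2 := by gcongr
    calc _ ≤ -(2 * b / M) * (n * a + b * C) + M * C * (2 * b / M) ^ 2 / 2 := by linarith
      _ = -(2 * n * a * b) / M := by field_simp; ring
  rw [hevent, ← ofReal_measureReal]
  gcongr
  exact (hS.measureReal_abs_gt_le_exp_add _ (t := 2 * b / M) (by positivity)).trans
    (by gcongr)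

/-- Hoeffding's inequality for Rademacher averages: for independent Rademacher variables `Uᵢ`
and fixed `0 ≤ cᵢ ≤ M`, `P{|(1/n) ∑ Uᵢ cᵢ| > a + b (1/n) ∑ cᵢ} ≤ 2 exp(-2 n a b / M)`. -/
theorem rademacher_weighted_tail
    {Ω : Type*} [MeasurableSpace Ω] (μ : Measure Ω) [IsProbabilityMeasure μ]
    (n : ℕ) (hn : 0 < n) (U : Fin n → Ω → ℝ)
    (hmeas : ∀ i, Measurable (U i))
    (hindep : iIndepFun U μ)
    (hrad : ∀ i, μ (U i ⁻¹' {1}) = 1 / 2 ∧ μ (U i ⁻¹' {-1}) = 1 / 2)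
    (c : Fin n → ℝ) (M : ℝ) (hM : 0 < M) (hc0 : ∀ i, 0 ≤ c i) (hcM : ∀ i, c i ≤ M)
    (a b : ℝ) (ha : 0 < a) (hb : 0 < b) :
    μ {ω | a + b * ((1 / (n : ℝ)) * ∑ i, c i) < |(1 / (n : ℝ)) * ∑ i, U i ω * c i|} ≤
      ENNReal.ofReal (2 * Real.exp (-(2 * (n : ℝ) * a * b) / M)) :=
  rademacher_weighted_tail_general μ n hn U hmeas hindep hrad c M hM hc0 hcM a b hb
end

section
/- Let X be a nonnegative random variable bounded by M > 0 and let X_1,...,X_n be i.i.d. copies of X. Then for any β > 0, P{|(1/n)∑ X_i − E[X]| > (β/2)(α + (1/n)∑ X_i + E[X])} ≤ M/(β^2 α n), for every α > 0. -/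
/-!
Writing `m = E[X]` and `Y` for the empirical mean, the Bhatia–Davis bound `Var X ≤ (M - m) m`
and independence give `Var Y ≤ M m / n`. Since `Y ≥ 0`, the event forces
`|Y - m| > (β/2)(α + m)`, so Chebyshev bounds its probability by
`4 M m / (n β² (α + m)²)`, and `4 α m ≤ (α + m)²` removes the dependence on `m`.
-/

open MeasureTheory ProbabilityTheory

namespace ProbabilityTheory

variable {Ω : Type*} [MeasurableSpace Ω] {μ : Measure Ω}

lemma variance_le_mul_integral_of_mem_Icc [IsProbabilityMeasure μ] {X : Ω → ℝ} {M : ℝ}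
    (hXM : ∀ᵐ ω ∂μ, X ω ∈ Set.Icc 0 M) (hX : AEMeasurable X μ) :
    variance X μ ≤ M * μ[X] := by
  have hm : 0 ≤ μ[X] := integral_nonneg_of_ae (hXM.mono fun _ h => h.1)
  have := variance_le_sub_mul_sub hXM hX
  nlinarith

lemma variance_mean_le_of_iIndepFun {ι : Type*} [Fintype ι] {X : ι → Ω → ℝ}
    (hX : ∀ i, MemLp (X i) 2 μ) (hindep : iIndepFun X μ) {v : ℝ}
    (hv : ∀ i, variance (X i) μ ≤ v) :
    variance (fun ω => 1 / (Fintype.card ι : ℝ) * ∑ i, X i ω) μ ≤ v / Fintype.card ι := by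
  have hsum : variance (fun ω => ∑ i, X i ω) μ ≤ Fintype.card ι * v := by
    have hfun : (fun ω => ∑ i, X i ω) = ∑ i, X i := by ext; simp
    rw [hfun, IndepFun.variance_sum (fun i _ => hX i) fun i _ j _ hij => hindep.indepFun hij]
    simpa using Finset.sum_le_sum fun i (_ : i ∈ Finset.univ) => hv i
  rw [variance_const_mul]
  rcases eq_or_ne (Fintype.card ι : ℝ) 0 with hcard | hcard
  · simp [hcard]
  · calc (1 / (Fintype.card ι : ℝ)) ^ 2 * variance (fun ω => ∑ i, X i ω) μ
        ≤ (1 / (Fintype.card ι : ℝ)) ^ 2 * (Fintype.card ι * v) := by gcongr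
      _ = v / Fintype.card ι := by field_simp

lemma measure_relative_deviation_le [IsFiniteMeasure μ] {Y : Ω → ℝ} (hY : MemLp Y 2 μ)
    (hY0 : ∀ᵐ ω ∂μ, 0 ≤ Y ω) {α β : ℝ} (hα : 0 < α) (hβ : 0 < β) :
    μ {ω | β / 2 * (α + Y ω + μ[Y]) < |Y ω - μ[Y]|} ≤
      ENNReal.ofReal (variance Y μ / (β / 2 * (α + μ[Y])) ^ 2) := by
  have hm : 0 ≤ μ[Y] := integral_nonneg_of_ae hY0
  refine le_trans (measure_mono_ae ?_) (meas_ge_le_variance_div_sq hY (by positivity))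
  filter_upwards [hY0] with ω hω0 hω
  change β / 2 * (α + μ[Y]) ≤ |Y ω - μ[Y]|
  have : β / 2 * (α + μ[Y]) ≤ β / 2 * (α + Y ω + μ[Y]) := by gcongr; linarith
  exact this.trans (le_of_lt hω)

end ProbabilityTheory

lemma div_sq_half_mul_add_le {v M m α β n : ℝ} (hv : v ≤ M * m / n) (hM : 0 ≤ M)
    (hm : 0 ≤ m) (hα : 0 < α) (hβ : 0 < β) (hn : 0 < n) :
    v / (β / 2 * (α + m)) ^ 2 ≤ M / (β ^ 2 * α * n) := by
  rw [div_le_div_iff₀ (by positivity) (by positivity)]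
  calc v * (β ^ 2 * α * n) ≤ M * m / n * (β ^ 2 * α * n) := by gcongr
    _ = M * (β ^ 2 / 4) * (4 * α * m) := by field_simp
    _ ≤ M * (β ^ 2 / 4) * (α + m) ^ 2 := by gcongr; exact four_mul_le_sq_add α m
    _ = M * (β / 2 * (α + m)) ^ 2 := by ring

/-- Chebyshev-type relative deviation bound for bounded nonnegative i.i.d. random variables:
for `0 ≤ Xᵢ ≤ M` i.i.d. and any `α, β > 0`,
`P{|(1/n) ∑ Xᵢ - E[X]| > (β/2)(α + (1/n) ∑ Xᵢ + E[X])} ≤ M/(β² α n)`. -/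
theorem bounded_iid_relative_deviation
    {Ω : Type*} [MeasurableSpace Ω] (μ : Measure Ω) [IsProbabilityMeasure μ]
    (n : ℕ) (hn : 0 < n) (X : Fin n → Ω → ℝ) (M : ℝ) (hM : 0 < M)
    (hmeas : ∀ i, Measurable (X i))
    (hbound : ∀ i, ∀ ω, 0 ≤ X i ω ∧ X i ω ≤ M)
    (hindep : iIndepFun X μ)
    (hident : ∀ i, μ.map (X i) = μ.map (X ⟨0, hn⟩))
    (α β : ℝ) (hα : 0 < α) (hβ : 0 < β) :
    μ {ω | (β / 2) * (α + (1 / (n : ℝ)) * ∑ i, X i ω + ∫ ω', X ⟨0, hn⟩ ω' ∂μ) <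
        |(1 / (n : ℝ)) * ∑ i, X i ω - ∫ ω', X ⟨0, hn⟩ ω' ∂μ|} ≤
      ENNReal.ofReal (M / (β ^ 2 * α * n)) := by
  set m := ∫ ω', X ⟨0, hn⟩ ω' ∂μ
  set Y : Ω → ℝ := fun ω => 1 / (n : ℝ) * ∑ i, X i ω
  have hIcc : ∀ i, ∀ᵐ ω ∂μ, X i ω ∈ Set.Icc 0 M := fun i => ae_of_all _ (hbound i)
  have hL2 : ∀ i, MemLp (X i) 2 μ :=
    fun i => memLp_of_bounded (hIcc i) (hmeas i).aestronglyMeasurable 2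
  have hmean : ∀ i, μ[X i] = m := fun i =>
    IdentDistrib.integral_eq ⟨(hmeas i).aemeasurable, (hmeas _).aemeasurable, hident i⟩
  have hY0 : ∀ ω, 0 ≤ Y ω := fun ω =>
    mul_nonneg (by positivity) (Finset.sum_nonneg fun i _ => (hbound i ω).1)
  have hYL2 : MemLp Y 2 μ := by
    simpa [Y, Finset.sum_apply] using
      (memLp_finsetSum' _ fun i _ => hL2 i).const_mul (1 / (n : ℝ))
  have hEY : μ[Y] = m := by
    simp only [Y, integral_const_mul,
      integral_finsetSum _ fun i _ => (hL2 i).integrable one_le_two, hmean, Finset.sum_const,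
      Finset.card_univ, Fintype.card_fin, nsmul_eq_mul]
    field_simp
  have hvar : variance Y μ ≤ M * m / n := by
    have := variance_mean_le_of_iIndepFun hL2 hindep fun i =>
      (hmean i ▸ variance_le_mul_integral_of_mem_Icc (hIcc i) (hmeas i).aemeasurable)
    simpa only [Fintype.card_fin] using this
  have hm : 0 ≤ m := hEY ▸ integral_nonneg hY0
  calc μ {ω | β / 2 * (α + Y ω + m) < |Y ω - m|}
      ≤ ENNReal.ofReal (variance Y μ / (β / 2 * (α + m)) ^ 2) :=
        hEY ▸ measure_relative_deviation_le hYL2 (ae_of_all _ hY0) hα hβ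
    _ ≤ ENNReal.ofReal (M / (β ^ 2 * α * n)) :=
        ENNReal.ofReal_le_ofReal (div_sq_half_mul_add_le hvar hM.le hm hα hβ (by positivity))
end
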